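/- arXiv:2306.13898 — 2 statements merged into one kernel-verified Lean document; each statement's English description precedes it below -/
import Mathlib

section
/- Let X be a two-sided subshift over a finite alphabet, let φ : X → ℝ and h : X → ℝ be continuous with h(x) < 0 for all x ∈ X, and suppose P ∈ ℝ is such that lim_{n→∞} (1/n) log( Σ_{I∈X*, |I|=n} sup_{x∈[I]∩X} exp(S_nφ(x)) ) = P. Then for every λ > 0 there exists r_2 ∈ (0, r_0) such that for every 0 < r < r_2 one has Σ_{I∈A_r} exp(−(λ+P)|I|)·sup_{x∈[I]∩X} exp(S_{|I|}φ(x)) < 1. -/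
open scoped ENNReal

/-- The shift map on the two-sided full shift over the alphabet `Fin l`. -/
def shiftMap (l : ℕ) : (ℤ → Fin l) → (ℤ → Fin l) := fun w j => w (j + 1)

/-- The Birkhoff sum `S_n φ (x) = ∑_{j=0}^{n-1} φ (σ^j x)`. -/
noncomputable def birkSum (l : ℕ) (φ : (ℤ → Fin l) → ℝ) (n : ℕ) (x : ℤ → Fin l) : ℝ :=
  ∑ j ∈ Finset.range n, φ ((shiftMap l)^[j] x)

/-- The cylinder `[I]` of a finite word `I = i₀ i₁ ⋯ i_{n-1}`. -/
def cylinder (l : ℕ) (I : List (Fin l)) : Set (ℤ → Fin l) :=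
  {w | ∀ (j : ℕ) (hj : j < I.length), w (j : ℤ) = I.get ⟨j, hj⟩}

/-- `X*` : the finite words allowed in `X`. -/
def words (l : ℕ) (X : Set (ℤ → Fin l)) : Set (List (Fin l)) :=
  {I | I ≠ [] ∧ (cylinder l I ∩ X).Nonempty}

/-- `sup_{x ∈ [I] ∩ X} exp (S_{|I|} φ (x))`. -/
noncomputable def supExp (l : ℕ) (X : Set (ℤ → Fin l)) (φ : (ℤ → Fin l) → ℝ)
    (I : List (Fin l)) : ℝ :=
  sSup ((fun x => Real.exp (birkSum l φ I.length x)) '' (cylinder l I ∩ X))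

/-- `r₀ = sup_{x ∈ X} exp (h x)`. -/
noncomputable def rZero (l : ℕ) (X : Set (ℤ → Fin l)) (h : (ℤ → Fin l) → ℝ) : ℝ :=
  sSup ((fun x => Real.exp (h x)) '' X)

/-- The family of words `A_r`.  (For a word of length `1` the second condition reads `r ≤ 1`,
since the `dropLast` of a one-letter word is the empty word, whose cylinder is everything and
whose Birkhoff sum is `0`.) -/
noncomputable def wordsAt (l : ℕ) (X : Set (ℤ → Fin l)) (h : (ℤ → Fin l) → ℝ) (r : ℝ) :
    Set (List (Fin l)) :=
  {I | I ∈ words l X ∧ supExp l X h I < r ∧ r ≤ supExp l X h I.dropLast}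

/-- The weight `exp (-λ |I|) · sup_{x ∈ [I] ∩ X} exp (S_{|I|} φ (x))` of a word, in `ℝ≥0∞`. -/
noncomputable def wt (l : ℕ) (X : Set (ℤ → Fin l)) (φ : (ℤ → Fin l) → ℝ)
    (lam : ℝ) (I : List (Fin l)) : ℝ≥0∞ :=
  ENNReal.ofReal (Real.exp (-lam * (I.length : ℝ)) * supExp l X φ I)

/-- `m_P(Z, λ, φ, n)` : infimum over countable covers of `Z` by cylinders of allowed words of
length at least `n`. -/
noncomputable def mPaux (l : ℕ) (X : Set (ℤ → Fin l)) (φ : (ℤ → Fin l) → ℝ)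
    (Z : Set (ℤ → Fin l)) (lam : ℝ) (n : ℕ) : ℝ≥0∞ :=
  ⨅ (T : Set (List (Fin l))) (_ : T.Countable)
    (_ : ∀ I ∈ T, I ∈ words l X ∧ n ≤ I.length)
    (_ : Z ⊆ ⋃ I ∈ T, cylinder l I),
    ∑' I : T, wt l X φ lam I.1

/-- `m_P(Z, λ, φ) = lim_{n → ∞} m_P(Z, λ, φ, n)` (a monotone limit, hence a supremum). -/
noncomputable def mP (l : ℕ) (X : Set (ℤ → Fin l)) (φ : (ℤ → Fin l) → ℝ)
    (Z : Set (ℤ → Fin l)) (lam : ℝ) : ℝ≥0∞ :=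
  ⨆ n : ℕ, mPaux l X φ Z lam n

/-- The topological pressure `P_Z(σ, φ)` of `φ` on `Z`. -/
noncomputable def press (l : ℕ) (X : Set (ℤ → Fin l)) (φ : (ℤ → Fin l) → ℝ)
    (Z : Set (ℤ → Fin l)) : ℝ :=
  sInf {lam : ℝ | mP l X φ Z lam = 0}

/-- `m̃_P(Z, λ, φ, r)` : infimum over countable covers of `Z` by cylinders of words belonging to
`A_{r'}` for some `0 < r' ≤ r`. -/
noncomputable def mtPaux (l : ℕ) (X : Set (ℤ → Fin l)) (h φ : (ℤ → Fin l) → ℝ)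
    (Z : Set (ℤ → Fin l)) (lam : ℝ) (r : ℝ) : ℝ≥0∞ :=
  ⨅ (T : Set (List (Fin l))) (_ : T.Countable)
    (_ : ∀ I ∈ T, ∃ r' : ℝ, 0 < r' ∧ r' ≤ r ∧ I ∈ wordsAt l X h r')
    (_ : Z ⊆ ⋃ I ∈ T, cylinder l I),
    ∑' I : T, wt l X φ lam I.1

/-- `m̃_P(Z, λ, φ) = lim_{r → 0} m̃_P(Z, λ, φ, r)` (a monotone limit, hence a supremum). -/
noncomputable def mtP (l : ℕ) (X : Set (ℤ → Fin l)) (h φ : (ℤ → Fin l) → ℝ)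
    (Z : Set (ℤ → Fin l)) (lam : ℝ) : ℝ≥0∞ :=
  ⨆ (r : ℝ) (_ : 0 < r), mtPaux l X h φ Z lam r

/-- The pressure `P̃_Z(σ, φ)`. -/
noncomputable def presst (l : ℕ) (X : Set (ℤ → Fin l)) (h φ : (ℤ → Fin l) → ℝ)
    (Z : Set (ℤ → Fin l)) : ℝ :=
  sInf {lam : ℝ | mtP l X h φ Z lam = 0}

/-- `Σ_{I ∈ X*, |I| = n} sup_{x ∈ [I] ∩ X} exp (S_n φ (x))`. -/
noncomputable def partFn (l : ℕ) (X : Set (ℤ → Fin l)) (φ : (ℤ → Fin l) → ℝ) (n : ℕ) : ℝ :=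
  ∑' I : {I : List (Fin l) // I ∈ words l X ∧ I.length = n}, supExp l X φ I.1


section AuxLemmas

open Filter

variable {l : ℕ} {X : Set (ℤ → Fin l)}

lemma iterate_mem_of_inv (hXinv : shiftMap l '' X = X) {x : ℤ → Fin l} (hx : x ∈ X) (j : ℕ) :
    (shiftMap l)^[j] x ∈ X := by
  induction j with
  | zero => exact hx
  | succ n ih =>
    rw [Function.iterate_succ_apply', ← hXinv]
    exact Set.mem_image_of_mem _ ih

lemma supExp_nonneg (l : ℕ) (X : Set (ℤ → Fin l)) (φ : (ℤ → Fin l) → ℝ) (I : List (Fin l)) :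
    0 ≤ supExp l X φ I := by
  apply Real.sSup_nonneg
  rintro y ⟨x, -, rfl⟩
  exact (Real.exp_pos _).le

/-- The set of allowed words of length `n` is a finite type. -/
lemma finite_wordsLen (l : ℕ) (X : Set (ℤ → Fin l)) (n : ℕ) :
    Finite {I : List (Fin l) // I ∈ words l X ∧ I.length = n} := by
  have : {I : List (Fin l) | I ∈ words l X ∧ I.length = n}.Finite :=
    (List.finite_length_eq (Fin l) n).subset fun I hI => hI.2
  exact this.to_subtype

end AuxLemmas

set_option maxHeartbeats 1000000 in
/-- If `(1/n) log Σ_{|I|=n} sup_{[I]∩X} exp (S_n φ) → P`, then for every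
`λ > 0` there is `r₂ ∈ (0, r₀)` such that for all `0 < r < r₂`,
`Σ_{I ∈ A_r} exp(-(λ+P)|I|) · sup_{x ∈ [I]∩X} exp (S_{|I|} φ (x)) < 1`. -/
theorem sum_over_Ar_lt_one (l : ℕ) (hl : 1 ≤ l) (X : Set (ℤ → Fin l))
    (hXne : X.Nonempty) (hXcpt : IsCompact X) (hXinv : shiftMap l '' X = X)
    (φ h : (ℤ → Fin l) → ℝ) (hφ : ContinuousOn φ X) (hh : ContinuousOn h X)
    (hneg : ∀ x ∈ X, h x < 0) (P : ℝ)
    (hP : Filter.Tendsto (fun n : ℕ => (1 / (n : ℝ)) * Real.log (partFn l X φ n))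
      Filter.atTop (nhds P)) :
    ∀ lam : ℝ, 0 < lam → ∃ r₂ : ℝ, 0 < r₂ ∧ r₂ < rZero l X h ∧
      ∀ r : ℝ, 0 < r → r < r₂ →
        (∑' I : wordsAt l X h r, wt l X φ (lam + P) I.1) < 1 := by
  intro lam hlam
  -- a lower bound `-b` for `h` on `X`
  obtain ⟨xm, hxm, hmin⟩ := hXcpt.exists_isMinOn hXne hh
  set b : ℝ := -h xm with hb_def
  have hb : 0 < b := by simpa [hb_def] using hneg xm hxm
  -- Birkhoff sums of `h` along points of `X`
  have hbirk_le : ∀ x ∈ X, ∀ n : ℕ, birkSum l h n x ≤ 0 := by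
    intro x hx n
    apply Finset.sum_nonpos
    intro j _
    exact (hneg _ (iterate_mem_of_inv hXinv hx j)).le
  have hbirk_ge : ∀ x ∈ X, ∀ n : ℕ, -b * n ≤ birkSum l h n x := by
    intro x hx n
    have : ∑ _j ∈ Finset.range n, (-b) ≤ birkSum l h n x := by
      apply Finset.sum_le_sum
      intro j _
      simpa [hb_def] using hmin (iterate_mem_of_inv hXinv hx j)
    simpa [mul_comm] using this
  -- eventual bound for `partFn`
  have hev : ∀ᶠ n : ℕ in Filter.atTop,
      (1 / (n : ℝ)) * Real.log (partFn l X φ n) < P + lam / 2 :=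
    hP.eventually (gt_mem_nhds (by linarith))
  obtain ⟨N₀, hN₀⟩ := Filter.eventually_atTop.mp (hev.and (Filter.eventually_ge_atTop 1))
  have hpart : ∀ n : ℕ, N₀ ≤ n → partFn l X φ n ≤ Real.exp ((P + lam / 2) * n) := by
    intro n hn
    obtain ⟨h1, h2⟩ := hN₀ n hn
    have hn0 : (0 : ℝ) < n := by exact_mod_cast h2
    have hlog : Real.log (partFn l X φ n) ≤ (P + lam / 2) * n := by
      have h3 := mul_le_mul_of_nonneg_left h1.le hn0.le
      rw [← mul_assoc, mul_one_div_cancel hn0.ne', one_mul] at h3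
      linarith [h3, mul_comm (P + lam / 2) (n : ℝ)]
    by_cases hp : 0 < partFn l X φ n
    · calc partFn l X φ n = Real.exp (Real.log (partFn l X φ n)) := (Real.exp_log hp).symm
        _ ≤ Real.exp ((P + lam / 2) * n) := Real.exp_le_exp.2 hlog
    · exact le_trans (not_lt.1 hp) (Real.exp_pos _).le
  -- the geometric ratio
  set q : ℝ≥0∞ := ENNReal.ofReal (Real.exp (-(lam / 2))) with hq_def
  have hq1 : q < 1 := by
    rw [hq_def, ENNReal.ofReal_lt_one]
    exact Real.exp_lt_one_iff.2 (by linarith)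
  have hqtop : (1 - q)⁻¹ ≠ ⊤ := ENNReal.inv_ne_top.2 (tsub_pos_of_lt hq1).ne'
  have htend : Filter.Tendsto (fun m : ℕ => q ^ m * (1 - q)⁻¹) Filter.atTop (nhds 0) := by
    have h0 := ENNReal.tendsto_pow_atTop_nhds_zero_of_lt_one hq1
    simpa using ENNReal.Tendsto.mul_const h0 (Or.inr hqtop)
  obtain ⟨M₁, hM₁⟩ := Filter.eventually_atTop.mp (htend.eventually (gt_mem_nhds zero_lt_one))
  set M : ℕ := max M₁ N₀ with hM_def
  -- positivity of r₀
  have hbddexp : BddAbove ((fun x => Real.exp (h x)) '' X) := by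
    refine ⟨1, ?_⟩
    rintro y ⟨x, hx, rfl⟩
    exact Real.exp_le_one_iff.2 (hneg x hx).le
  have hr0pos : 0 < rZero l X h :=
    lt_of_lt_of_le (Real.exp_pos (h xm)) (le_csSup hbddexp ⟨xm, hxm, rfl⟩)
  refine ⟨min (Real.exp (-b * M)) (rZero l X h / 2),
    lt_min (Real.exp_pos _) (by linarith), (min_le_right _ _).trans_lt (by linarith), ?_⟩
  intro r hr hrr₂
  -- every word in `A_r` has length at least `M`
  have hlen : ∀ I ∈ wordsAt l X h r, M ≤ I.length := by
    intro I hI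
    obtain ⟨⟨hne, x, hx⟩, hIr, -⟩ := hI
    have hxX : x ∈ X := hx.2
    have hbdd : BddAbove ((fun y => Real.exp (birkSum l h I.length y)) ''
        (cylinder l I ∩ X)) := by
      refine ⟨1, ?_⟩
      rintro z ⟨y, hy, rfl⟩
      exact Real.exp_le_one_iff.2 (hbirk_le y hy.2 _)
    have h1 : Real.exp (-b * I.length) ≤ supExp l X h I :=
      le_trans (Real.exp_le_exp.2 (hbirk_ge x hxX I.length))
        (le_csSup hbdd (Set.mem_image_of_mem _ hx))
    have h2 : Real.exp (-b * (I.length : ℝ)) < Real.exp (-b * (M : ℝ)) :=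
      lt_of_le_of_lt h1 (hIr.trans_le (hrr₂.le.trans (min_le_left _ _)))
    have h3 : -b * (I.length : ℝ) < -b * (M : ℝ) := Real.exp_lt_exp.1 h2
    have h4 : (M : ℝ) < I.length := by nlinarith
    exact (Nat.cast_lt.mp h4).le
  -- per-length bound
  have hWn : ∀ n : ℕ, M ≤ n →
      (∑' I : {I : List (Fin l) // I ∈ words l X ∧ I.length = n},
        wt l X φ (lam + P) I.1) ≤ q ^ n := by
    intro n hn
    have hnN₀ : N₀ ≤ n := le_trans (le_max_right _ _) hn
    haveI := finite_wordsLen l X n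
    have hreal : Real.exp (-(lam + P) * n) * partFn l X φ n ≤ Real.exp (-(lam / 2)) ^ n := by
      calc Real.exp (-(lam + P) * n) * partFn l X φ n
          ≤ Real.exp (-(lam + P) * n) * Real.exp ((P + lam / 2) * n) :=
            mul_le_mul_of_nonneg_left (hpart n hnN₀) (Real.exp_pos _).le
        _ = Real.exp ((n : ℝ) * (-(lam / 2))) := by rw [← Real.exp_add]; congr 1; ring
        _ = Real.exp (-(lam / 2)) ^ n := Real.exp_nat_mul _ n
    have e1 : (∑' I : {I : List (Fin l) // I ∈ words l X ∧ I.length = n},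
          wt l X φ (lam + P) I.1)
        = ENNReal.ofReal (Real.exp (-(lam + P) * n)) *
            ∑' I : {I : List (Fin l) // I ∈ words l X ∧ I.length = n},
              ENNReal.ofReal (supExp l X φ I.1) := by
      rw [← ENNReal.tsum_mul_left]
      refine tsum_congr fun I => ?_
      rw [wt, I.2.2, ENNReal.ofReal_mul (Real.exp_pos _).le]
    have e2 : ENNReal.ofReal (partFn l X φ n)
        = ∑' I : {I : List (Fin l) // I ∈ words l X ∧ I.length = n},
            ENNReal.ofReal (supExp l X φ I.1) :=
      ENNReal.ofReal_tsum_of_nonneg (fun I => supExp_nonneg l X φ I.1) Summable.of_finite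
    have e3 : ENNReal.ofReal (Real.exp (-(lam + P) * n)) * ENNReal.ofReal (partFn l X φ n)
        ≤ q ^ n := by
      rw [← ENNReal.ofReal_mul (Real.exp_pos _).le, hq_def,
        ← ENNReal.ofReal_pow (Real.exp_pos _).le n]
      exact ENNReal.ofReal_le_ofReal hreal
    rw [e1, ← e2]
    exact e3
  -- assemble
  calc (∑' I : wordsAt l X h r, wt l X φ (lam + P) I.1)
      ≤ ∑' p : Σ n : ℕ, {I : List (Fin l) // I ∈ words l X ∧ I.length = n},
          (if M ≤ p.1 then wt l X φ (lam + P) p.2.1 else 0) := by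
        refine Summable.tsum_le_tsum_of_inj
          (fun I => (⟨I.1.length, ⟨I.1, I.2.1, rfl⟩⟩ :
            Σ n : ℕ, {I : List (Fin l) // I ∈ words l X ∧ I.length = n}))
          ?_ (fun c _ => zero_le) ?_ ENNReal.summable ENNReal.summable
        · intro I J hIJ
          apply Subtype.ext
          exact congrArg (fun p : Σ n : ℕ,
            {I : List (Fin l) // I ∈ words l X ∧ I.length = n} => p.2.1) hIJ
        · intro I
          show wt l X φ (lam + P) I.1 ≤
            if M ≤ I.1.length then wt l X φ (lam + P) I.1 else 0
          rw [if_pos (hlen I.1 I.2)]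
    _ = ∑' n : ℕ, ∑' I : {I : List (Fin l) // I ∈ words l X ∧ I.length = n},
          (if M ≤ n then wt l X φ (lam + P) I.1 else 0) :=
        by rw [ENNReal.tsum_sigma']
    _ ≤ ∑' n : ℕ, (if M ≤ n then q ^ n else 0) := by
        refine ENNReal.tsum_le_tsum fun n => ?_
        by_cases hn : M ≤ n
        · simp only [if_pos hn]
          exact hWn n hn
        · simp [hn]
    _ ≤ ∑' n : ℕ, q ^ M * (if M ≤ n then q ^ (n - M) else 0) := by
        refine ENNReal.tsum_le_tsum fun n => ?_
        by_cases hn : M ≤ n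
        · simp only [if_pos hn, ← pow_add, Nat.add_sub_cancel' hn, le_refl]
        · simp [hn]
    _ = q ^ M * ∑' n : ℕ, (if M ≤ n then q ^ (n - M) else 0) := ENNReal.tsum_mul_left
    _ = q ^ M * ∑' k : ℕ, q ^ k := by
        congr 1
        rw [← Function.Injective.tsum_eq (g := fun k : ℕ => k + M) (add_left_injective M)
          (f := fun n : ℕ => if M ≤ n then q ^ (n - M) else 0) ?_]
        · refine tsum_congr fun k => ?_
          rw [if_pos (Nat.le_add_left M k), Nat.add_sub_cancel]
        · intro n hn
          have hMn : M ≤ n := by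
            by_contra hMn
            simp [hMn] at hn
          exact ⟨n - M, Nat.sub_add_cancel hMn⟩
    _ = q ^ M * (1 - q)⁻¹ := by rw [ENNReal.tsum_geometric]
    _ < 1 := hM₁ M (le_max_left _ _)
end

section
/- Let X be a two-sided subshift over a finite alphabet, let g : X → ℝ and h : X → ℝ be continuous with h(x) < 0 for all x ∈ X, and let t ∈ ℝ. Then for every ε > 0 there exists r* ∈ (0, r_0) such that for all 0 < r < r* one has r^{t+ε/2}·Θ_r ≤ Γ_r ≤ r^{t−ε/2}·Θ_r, where Γ_r = Σ_{I∈A_r} sup_{x∈[I]∩X} exp(S_{|I|}(g+th)(x)) and Θ_r = Σ_{I∈A_r} sup_{x∈[I]∩X} exp(S_{|I|}g(x)). -/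
open scoped ENNReal

/-!
Let `h ≤ -a < 0` on `X` and take `I ∈ A_r` of length `n`. Every `x ∈ [I] ∩ X` has
`S_n h x < log r`, while some `y ∈ [I⁻] ∩ X` (`I⁻` = `I` without its last letter) has
`log r ≤ S_{n-1} h y`; the latter also forces `(n - 1) a ≤ -log r`, so `A_r` is finite. As `x` and
`y` share their first `n - 1` coordinates, uniform continuity of `h` bounds
`|S_{n-1} h x - S_{n-1} h y|` by `n δ + O(1)` for any `δ > 0`. Hence `S_n h = log r + o(-log r)`
uniformly on the cylinders of `A_r` as `r → 0`, so `exp (t S_n h)` lies between `r^(t + ε/2)` and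
`r^(t - ε/2)` there; the summands of `Γ_r` and `Θ_r` then compare word by word.
-/

open Real Set

section Shift

variable {l : ℕ}

theorem shiftMap_iterate_apply (m : ℕ) (x : ℤ → Fin l) (j : ℤ) :
    (shiftMap l)^[m] x j = x (j + m) := by
  induction m generalizing x with
  | zero => simp
  | succ m ih =>
    rw [Function.iterate_succ_apply, ih, shiftMap, Nat.cast_succ, add_assoc]

theorem continuous_shiftMap : Continuous (shiftMap l) :=
  continuous_pi fun j => continuous_apply (j + 1)

theorem isClosed_cylinder (I : List (Fin l)) : IsClosed (cylinder l I) := by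
  have hI : cylinder l I = ⋂ j : Fin I.length, (fun w : ℤ → Fin l => w j) ⁻¹' {I.get j} := by
    ext w
    simp only [cylinder, mem_iInter, mem_preimage, mem_singleton_iff, Set.mem_ofPred_eq]
    exact ⟨fun hw j => hw j j.2, fun hw j hj => hw ⟨j, hj⟩⟩
  rw [hI]
  exact isClosed_iInter fun j => isClosed_singleton.preimage (continuous_apply _)

theorem cylinder_subset_cylinder_dropLast (I : List (Fin l)) :
    cylinder l I ⊆ cylinder l I.dropLast := by
  intro w hw j hj
  rw [List.get_eq_getElem, List.getElem_dropLast]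
  exact hw j (by rw [List.length_dropLast] at hj; omega)

theorem birkSum_succ (φ : (ℤ → Fin l) → ℝ) (n : ℕ) (x : ℤ → Fin l) :
    birkSum l φ (n + 1) x = birkSum l φ n x + φ ((shiftMap l)^[n] x) :=
  Finset.sum_range_succ _ _

theorem birkSum_add_mul (g h : (ℤ → Fin l) → ℝ) (t : ℝ) (n : ℕ) (x : ℤ → Fin l) :
    birkSum l (fun z => g z + t * h z) n x = birkSum l g n x + t * birkSum l h n x := by
  simp only [birkSum, Finset.sum_add_distrib, Finset.mul_sum]

variable {X : Set (ℤ → Fin l)}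

theorem continuousOn_birkSum (hσ : MapsTo (shiftMap l) X X) {φ : (ℤ → Fin l) → ℝ}
    (hφ : ContinuousOn φ X) (n : ℕ) : ContinuousOn (birkSum l φ n) X :=
  continuousOn_finsetSum _ fun j _ =>
    hφ.comp (continuous_shiftMap.iterate j).continuousOn (hσ.iterate j)

theorem birkSum_le_mul (hσ : MapsTo (shiftMap l) X X) {φ : (ℤ → Fin l) → ℝ} {c : ℝ}
    (hc : ∀ x ∈ X, φ x ≤ c) (n : ℕ) {x : ℤ → Fin l} (hx : x ∈ X) : birkSum l φ n x ≤ n * c := by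
  simpa [birkSum] using
    Finset.sum_le_card_nsmul (Finset.range n) _ c fun j _ => hc _ (hσ.iterate j hx)

end Shift

section SupExp

variable {l : ℕ} {X : Set (ℤ → Fin l)} {φ ψ : (ℤ → Fin l) → ℝ}

theorem isCompact_image_exp_birkSum (hX : IsCompact X) (hσ : MapsTo (shiftMap l) X X)
    (hφ : ContinuousOn φ X) (I : List (Fin l)) :
    IsCompact ((fun x => exp (birkSum l φ I.length x)) '' (cylinder l I ∩ X)) :=
  (hX.inter_left (isClosed_cylinder I)).image_of_continuousOn <|
    continuous_exp.comp_continuousOn ((continuousOn_birkSum hσ hφ _).mono inter_subset_right)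

theorem exp_birkSum_le_supExp (hX : IsCompact X) (hσ : MapsTo (shiftMap l) X X)
    (hφ : ContinuousOn φ X) {I : List (Fin l)} {x : ℤ → Fin l} (hx : x ∈ cylinder l I ∩ X) :
    exp (birkSum l φ I.length x) ≤ supExp l X φ I :=
  le_csSup (isCompact_image_exp_birkSum hX hσ hφ I).bddAbove (mem_image_of_mem _ hx)

theorem exists_exp_birkSum_eq_supExp (hX : IsCompact X) (hσ : MapsTo (shiftMap l) X X)
    (hφ : ContinuousOn φ X) {I : List (Fin l)} (hI : (cylinder l I ∩ X).Nonempty) :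
    ∃ x ∈ cylinder l I ∩ X, exp (birkSum l φ I.length x) = supExp l X φ I :=
  (isCompact_image_exp_birkSum hX hσ hφ I).sSup_mem (hI.image _)

theorem supExp_le_mul_supExp (hX : IsCompact X) (hσ : MapsTo (shiftMap l) X X)
    (hφ : ContinuousOn φ X) (hψ : ContinuousOn ψ X) {c : ℝ} (hc : 0 ≤ c) {I : List (Fin l)}
    (hφψ : ∀ x ∈ cylinder l I ∩ X,
      exp (birkSum l ψ I.length x) ≤ c * exp (birkSum l φ I.length x)) :
    supExp l X ψ I ≤ c * supExp l X φ I := by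
  rcases (cylinder l I ∩ X).eq_empty_or_nonempty with hI | hI
  · simp [supExp, hI]
  obtain ⟨x, hx, hxψ⟩ := exists_exp_birkSum_eq_supExp hX hσ hψ hI
  rw [← hxψ]
  exact (hφψ x hx).trans (mul_le_mul_of_nonneg_left (exp_birkSum_le_supExp hX hσ hφ hx) hc)

theorem mul_supExp_le_supExp (hX : IsCompact X) (hσ : MapsTo (shiftMap l) X X)
    (hφ : ContinuousOn φ X) (hψ : ContinuousOn ψ X) {c : ℝ} {I : List (Fin l)}
    (hφψ : ∀ x ∈ cylinder l I ∩ X,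
      c * exp (birkSum l φ I.length x) ≤ exp (birkSum l ψ I.length x)) :
    c * supExp l X φ I ≤ supExp l X ψ I := by
  rcases (cylinder l I ∩ X).eq_empty_or_nonempty with hI | hI
  · simp [supExp, hI]
  obtain ⟨x, hx, hxφ⟩ := exists_exp_birkSum_eq_supExp hX hσ hφ hI
  rw [← hxφ]
  exact (hφψ x hx).trans (exp_birkSum_le_supExp hX hσ hψ hx)

theorem supExp_add_mul_bounds (hX : IsCompact X) (hσ : MapsTo (shiftMap l) X X)
    (hφ : ContinuousOn φ X) (hψ : ContinuousOn ψ X) {t c₁ c₂ : ℝ} (hc₂ : 0 ≤ c₂)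
    {I : List (Fin l)}
    (hI : ∀ x ∈ cylinder l I ∩ X, exp (t * birkSum l ψ I.length x) ∈ Icc c₁ c₂) :
    c₁ * supExp l X φ I ≤ supExp l X (fun x => φ x + t * ψ x) I ∧
      supExp l X (fun x => φ x + t * ψ x) I ≤ c₂ * supExp l X φ I := by
  have hφψ : ContinuousOn (fun x => φ x + t * ψ x) X := hφ.add (continuousOn_const.mul hψ)
  constructor
  · refine mul_supExp_le_supExp hX hσ hφ hφψ fun x hx => ?_
    rw [birkSum_add_mul, exp_add, mul_comm (exp _)]
    exact mul_le_mul_of_nonneg_right (hI x hx).1 (exp_pos _).le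
  · refine supExp_le_mul_supExp hX hσ hφ hφψ hc₂ fun x hx => ?_
    rw [birkSum_add_mul, exp_add, mul_comm (exp _)]
    exact mul_le_mul_of_nonneg_right (hI x hx).2 (exp_pos _).le

theorem rZero_pos (hX : IsCompact X) (hXne : X.Nonempty) {h : (ℤ → Fin l) → ℝ}
    (hh : ContinuousOn h X) : 0 < rZero l X h := by
  obtain ⟨x, hx⟩ := hXne
  exact (exp_pos (h x)).trans_le <|
    le_csSup (hX.image_of_continuousOn (continuous_exp.comp_continuousOn hh)).bddAbove
      (mem_image_of_mem _ hx)

end SupExp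

section Distortion

variable {l : ℕ} {X : Set (ℤ → Fin l)} {h : (ℤ → Fin l) → ℝ}

theorem exists_abs_sub_le_of_eqOn_window (hX : IsCompact X) (hh : ContinuousOn h X) {δ : ℝ}
    (hδ : 0 < δ) : ∃ k : ℕ, ∀ x ∈ X, ∀ y ∈ X,
      (∀ j : ℤ, j.natAbs ≤ k → x j = y j) → |h x - h y| ≤ δ := by
  -- the discrete uniformity on `Fin l` induces its (discrete) topology, so Heine–Cantor applies
  let : UniformSpace (Fin l) := ⊥
  have hbasis : (uniformity (ℤ → Fin l)).HasBasis (fun s : Set ℤ => s.Finite)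
      fun s => ⋂ j ∈ s, {p | p.1 j = p.2 j} := by
    simp only [Pi.uniformity, bot_uniformity, Filter.comap_principal]
    exact Filter.hasBasis_iInf_principal_finite _
  obtain ⟨s, hs, hsδ⟩ := (hbasis.uniformContinuousOn_iff Metric.uniformity_basis_dist).1
    (hX.uniformContinuousOn_of_continuous hh) δ hδ
  refine ⟨hs.toFinset.sup Int.natAbs, fun x hx y hy hxy => (hsδ x hx y hy ?_).le⟩
  simp only [mem_iInter, Set.mem_ofPred_eq]
  exact fun j hj => hxy j (Finset.le_sup (hs.mem_toFinset.2 hj))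

theorem abs_birkSum_sub_le (hσ : MapsTo (shiftMap l) X X) {M δ : ℝ} (hM : ∀ x ∈ X, |h x| ≤ M)
    {k : ℕ} (hk : ∀ x ∈ X, ∀ y ∈ X, (∀ j : ℤ, j.natAbs ≤ k → x j = y j) → |h x - h y| ≤ δ)
    {n : ℕ} {x y : ℤ → Fin l} (hx : x ∈ X) (hy : y ∈ X) (hxy : ∀ j < n, x j = y j) :
    |birkSum l h n x - birkSum l h n y| ≤ n * δ + 2 * k * (2 * M) := by
  have hM0 : 0 ≤ M := (abs_nonneg _).trans (hM x hx)
  have hδ : 0 ≤ δ := (abs_nonneg _).trans (hk x hx x hx fun _ _ => rfl)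
  -- `σ^j x` and `σ^j y` agree on the window `[-k, k]` once `[j - k, j + k] ⊆ [0, n)`
  have hterm : ∀ j ∈ Finset.range n,
      |h ((shiftMap l)^[j] x) - h ((shiftMap l)^[j] y)| ≤
        if k ≤ j ∧ j + k < n then δ else 2 * M := by
    intro j _
    split_ifs with hj
    · refine hk _ (hσ.iterate j hx) _ (hσ.iterate j hy) fun m hm => ?_
      rw [shiftMap_iterate_apply, shiftMap_iterate_apply]
      obtain ⟨i, hi⟩ : ∃ i : ℕ, m + j = i := ⟨(m + j).toNat, by omega⟩
      rw [hi]
      exact hxy i (by omega)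
    · exact (abs_sub _ _).trans (by linarith [hM _ (hσ.iterate j hx), hM _ (hσ.iterate j hy)])
  have hbad : ((Finset.range n).filter fun j => ¬(k ≤ j ∧ j + k < n)).card ≤ 2 * k := by
    have hsub : (Finset.range n).filter (fun j => ¬(k ≤ j ∧ j + k < n)) ⊆
        Finset.range k ∪ Finset.Ico (n - k) n := by
      intro j
      simp only [Finset.mem_filter, Finset.mem_range, Finset.mem_union, Finset.mem_Ico]
      omega
    refine (Finset.card_le_card hsub).trans ((Finset.card_union_le _ _).trans ?_)
    simp only [Finset.card_range, Nat.card_Ico]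
    omega
  have hgood : ((Finset.range n).filter fun j => k ≤ j ∧ j + k < n).card ≤ n :=
    (Finset.card_filter_le _ _).trans (Finset.card_range n).le
  rw [birkSum, birkSum, ← Finset.sum_sub_distrib]
  calc _ ≤ _ := Finset.abs_sum_le_sum_abs _ _
    _ ≤ _ := Finset.sum_le_sum hterm
    _ = ((Finset.range n).filter fun j => k ≤ j ∧ j + k < n).card * δ
          + ((Finset.range n).filter fun j => ¬(k ≤ j ∧ j + k < n)).card * (2 * M) := by
      rw [Finset.sum_ite, Finset.sum_const, Finset.sum_const, nsmul_eq_mul, nsmul_eq_mul]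
    _ ≤ n * δ + 2 * k * (2 * M) := by
      gcongr
      exact_mod_cast hbad

end Distortion

theorem IsCompact.exists_pos_forall_le_neg {α : Type*} [TopologicalSpace α] {s : Set α}
    (hs : IsCompact s) {f : α → ℝ} (hf : ContinuousOn f s) (hneg : ∀ x ∈ s, f x < 0) :
    ∃ a > 0, ∀ x ∈ s, f x ≤ -a := by
  rcases s.eq_empty_or_nonempty with rfl | hne
  · exact ⟨1, one_pos, by simp⟩
  obtain ⟨z, hz, hzmax⟩ := hs.exists_isMaxOn hne hf
  exact ⟨-f z, neg_pos.2 (hneg z hz), fun x hx => by simpa using hzmax hx⟩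

theorem exp_mul_mem_Icc_rpow {r s t η ε : ℝ} (hr : 0 < r) (hη : 0 < η) (htη : |t| * η ≤ ε / 2)
    (hs : |s - log r| ≤ η * -log r) :
    exp (t * s) ∈ Icc (r ^ (t + ε / 2)) (r ^ (t - ε / 2)) := by
  have hL : 0 ≤ -log r := nonneg_of_mul_nonneg_right ((abs_nonneg _).trans hs) hη
  have hts : |t * s - t * log r| ≤ ε / 2 * -log r :=
    calc |t * s - t * log r| = |t| * |s - log r| := by rw [← mul_sub, abs_mul]
      _ ≤ |t| * (η * -log r) := by gcongr
      _ = |t| * η * -log r := by ring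
      _ ≤ ε / 2 * -log r := by gcongr
  rw [rpow_def_of_pos hr, rpow_def_of_pos hr, mem_Icc, exp_le_exp, exp_le_exp]
  constructor <;> linarith [abs_le.1 hts]

section Words

variable {l : ℕ} {X : Set (ℤ → Fin l)} {h : (ℤ → Fin l) → ℝ} {r : ℝ} {I : List (Fin l)}

theorem birkSum_lt_log_of_mem_wordsAt (hX : IsCompact X) (hσ : MapsTo (shiftMap l) X X)
    (hh : ContinuousOn h X) (hr : 0 < r) (hI : I ∈ wordsAt l X h r) {x : ℤ → Fin l}
    (hx : x ∈ cylinder l I ∩ X) : birkSum l h I.length x < log r :=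
  (lt_log_iff_exp_lt hr).2 ((exp_birkSum_le_supExp hX hσ hh hx).trans_lt hI.2.1)

theorem exists_log_le_birkSum_of_mem_wordsAt (hX : IsCompact X) (hσ : MapsTo (shiftMap l) X X)
    (hh : ContinuousOn h X) (hr : 0 < r) (hI : I ∈ wordsAt l X h r) :
    ∃ y ∈ cylinder l I.dropLast ∩ X, log r ≤ birkSum l h (I.length - 1) y := by
  obtain ⟨y, hy, hyI⟩ := exists_exp_birkSum_eq_supExp hX hσ hh
    (hI.1.2.mono (inter_subset_inter_left X (cylinder_subset_cylinder_dropLast I)))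
  refine ⟨y, hy, ?_⟩
  rw [log_le_iff_le_exp hr, ← List.length_dropLast, hyI]
  exact hI.2.2

theorem length_sub_one_mul_le_neg_log (hX : IsCompact X) (hσ : MapsTo (shiftMap l) X X)
    (hh : ContinuousOn h X) {a : ℝ} (ha : ∀ x ∈ X, h x ≤ -a) (hr : 0 < r)
    (hI : I ∈ wordsAt l X h r) : ((I.length - 1 : ℕ) : ℝ) * a ≤ -log r := by
  obtain ⟨y, hy, hry⟩ := exists_log_le_birkSum_of_mem_wordsAt hX hσ hh hr hI
  linarith [birkSum_le_mul hσ ha (I.length - 1) hy.2]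

theorem wordsAt_finite (hX : IsCompact X) (hσ : MapsTo (shiftMap l) X X)
    (hh : ContinuousOn h X) {a : ℝ} (ha0 : 0 < a) (ha : ∀ x ∈ X, h x ≤ -a) (hr : 0 < r) :
    (wordsAt l X h r).Finite := by
  refine (List.finite_length_le (Fin l) (⌈-log r / a⌉₊ + 1)).subset fun I hI => ?_
  have hlen : I.length - 1 ≤ ⌈-log r / a⌉₊ := by
    exact_mod_cast ((le_div_iff₀ ha0).2
      (length_sub_one_mul_le_neg_log hX hσ hh ha hr hI)).trans (Nat.le_ceil _)
  simp only [Set.mem_ofPred_eq]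
  omega

theorem log_sub_le_birkSum_of_mem_wordsAt (hX : IsCompact X) (hσ : MapsTo (shiftMap l) X X)
    (hh : ContinuousOn h X) {M δ : ℝ} (hM : ∀ x ∈ X, |h x| ≤ M) {k : ℕ}
    (hk : ∀ x ∈ X, ∀ y ∈ X, (∀ j : ℤ, j.natAbs ≤ k → x j = y j) → |h x - h y| ≤ δ)
    (hr : 0 < r) (hI : I ∈ wordsAt l X h r) {x : ℤ → Fin l} (hx : x ∈ cylinder l I ∩ X) :
    log r - ((I.length - 1 : ℕ) * δ + (2 * k * (2 * M) + M)) ≤ birkSum l h I.length x := by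
  obtain ⟨y, hy, hry⟩ := exists_log_le_birkSum_of_mem_wordsAt hX hσ hh hr hI
  obtain ⟨n, hn⟩ : ∃ n, I.length = n + 1 :=
    Nat.exists_eq_succ_of_ne_zero (List.length_pos_iff.2 hI.1.1).ne'
  have hxy : ∀ j < n, x j = y j := fun j hj => by
    have hj' : j < I.dropLast.length := by rw [List.length_dropLast, hn]; omega
    rw [cylinder_subset_cylinder_dropLast I hx.1 j hj', hy.1 j hj']
  rw [hn, Nat.add_sub_cancel] at hry ⊢
  rw [birkSum_succ]
  have hvar := abs_le.1 (abs_birkSum_sub_le hσ hM hk hx.2 hy.2 hxy)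
  have hlast := abs_le.1 (hM _ (hσ.iterate n hx.2))
  linarith

theorem exists_forall_wordsAt_abs_birkSum_sub_log_le (hX : IsCompact X)
    (hσ : MapsTo (shiftMap l) X X) (hh : ContinuousOn h X) {a : ℝ} (ha0 : 0 < a)
    (ha : ∀ x ∈ X, h x ≤ -a) {η : ℝ} (hη : 0 < η) :
    ∃ ρ > 0, ∀ r, 0 < r → r < ρ → ∀ I ∈ wordsAt l X h r, ∀ x ∈ cylinder l I ∩ X,
      |birkSum l h I.length x - log r| ≤ η * -log r := by
  obtain ⟨M, hM⟩ := hX.exists_bound_of_continuousOn hh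
  obtain ⟨k, hk⟩ := exists_abs_sub_le_of_eqOn_window hX hh (by positivity : 0 < a * η / 2)
  set C := 2 * k * (2 * M) + M
  refine ⟨exp (-(2 * C / η)), exp_pos _, fun r hr hrρ I hI x hx => ?_⟩
  have hC : C ≤ η / 2 * -log r := by
    have := (log_lt_iff_lt_exp hr).2 hrρ
    rw [lt_neg, div_lt_iff₀ hη] at this
    linarith
  have hlen := mul_le_mul_of_nonneg_right (length_sub_one_mul_le_neg_log hX hσ hh ha hr hI)
    (by positivity : 0 ≤ η / 2)
  have hup := birkSum_lt_log_of_mem_wordsAt hX hσ hh hr hI hx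
  have hlow := log_sub_le_birkSum_of_mem_wordsAt hX hσ hh hM hk hr hI hx
  rw [abs_le]
  constructor <;> linarith

end Words

theorem Gamma_between_rpow_mul_Theta_general (l : ℕ) (X : Set (ℤ → Fin l))
    (hXne : X.Nonempty) (hXcpt : IsCompact X) (hXinv : shiftMap l '' X = X)
    (g h : (ℤ → Fin l) → ℝ) (hg : ContinuousOn g X) (hh : ContinuousOn h X)
    (hneg : ∀ x ∈ X, h x < 0) (t : ℝ) :
    ∀ ε : ℝ, 0 < ε → ∃ rstar : ℝ, 0 < rstar ∧ rstar < rZero l X h ∧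
      ∀ r : ℝ, 0 < r → r < rstar →
        r ^ (t + ε / 2) * (∑' I : wordsAt l X h r, supExp l X g I.1) ≤
            (∑' I : wordsAt l X h r, supExp l X (fun x => g x + t * h x) I.1) ∧
          (∑' I : wordsAt l X h r, supExp l X (fun x => g x + t * h x) I.1) ≤
            r ^ (t - ε / 2) * (∑' I : wordsAt l X h r, supExp l X g I.1) := by
  intro ε hε
  have hσ : MapsTo (shiftMap l) X X := mapsTo_iff_image_subset.2 hXinv.subset
  obtain ⟨a, ha0, ha⟩ := hXcpt.exists_pos_forall_le_neg hh hneg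
  have hη : |t| * (ε / (2 * (|t| + 1))) ≤ ε / 2 := by
    rw [mul_div_assoc', div_le_div_iff₀ (by positivity) two_pos]
    nlinarith [abs_nonneg t]
  obtain ⟨ρ, hρ, hest⟩ := exists_forall_wordsAt_abs_birkSum_sub_log_le hXcpt hσ hh ha0 ha
    (by positivity : 0 < ε / (2 * (|t| + 1)))
  have hr0 := rZero_pos hXcpt hXne hh
  refine ⟨min ρ (rZero l X h / 2), lt_min hρ (half_pos hr0),
    (min_le_right _ _).trans_lt (half_lt_self hr0), fun r hr hrρ => ?_⟩
  have hterm : ∀ I : wordsAt l X h r,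
      r ^ (t + ε / 2) * supExp l X g I.1 ≤ supExp l X (fun x => g x + t * h x) I.1 ∧
        supExp l X (fun x => g x + t * h x) I.1 ≤ r ^ (t - ε / 2) * supExp l X g I.1 :=
    fun I => supExp_add_mul_bounds hXcpt hσ hg hh (by positivity) fun x hx =>
      exp_mul_mem_Icc_rpow hr (by positivity) hη
        (hest r hr (hrρ.trans_le (min_le_left _ _)) I.1 I.2 x hx)
  have := (wordsAt_finite hXcpt hσ hh ha0 ha hr).to_subtype
  rw [← tsum_mul_left, ← tsum_mul_left]
  exact ⟨Summable.tsum_le_tsum (fun I => (hterm I).1) .of_finite .of_finite,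
    Summable.tsum_le_tsum (fun I => (hterm I).2) .of_finite .of_finite⟩

/-- For every `ε > 0` there is `r* ∈ (0, r₀)` such that for all `0 < r < r*`
one has `r^(t+ε/2) · Θ_r ≤ Γ_r ≤ r^(t-ε/2) · Θ_r`. -/
theorem Gamma_between_rpow_mul_Theta (l : ℕ) (hl : 1 ≤ l) (X : Set (ℤ → Fin l))
    (hXne : X.Nonempty) (hXcpt : IsCompact X) (hXinv : shiftMap l '' X = X)
    (g h : (ℤ → Fin l) → ℝ) (hg : ContinuousOn g X) (hh : ContinuousOn h X)
    (hneg : ∀ x ∈ X, h x < 0) (t : ℝ) :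
    ∀ ε : ℝ, 0 < ε → ∃ rstar : ℝ, 0 < rstar ∧ rstar < rZero l X h ∧
      ∀ r : ℝ, 0 < r → r < rstar →
        r ^ (t + ε / 2) * (∑' I : wordsAt l X h r, supExp l X g I.1) ≤
            (∑' I : wordsAt l X h r, supExp l X (fun x => g x + t * h x) I.1) ∧
          (∑' I : wordsAt l X h r, supExp l X (fun x => g x + t * h x) I.1) ≤
            r ^ (t - ε / 2) * (∑' I : wordsAt l X h r, supExp l X g I.1) :=
  Gamma_between_rpow_mul_Theta_general l X hXne hXcpt hXinv g h hg hh hneg t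
end
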